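/- Let A be a bounded nonnegative selfadjoint operator on a Hilbert space X. Then the Moore–Penrose pseudo-inverse of A^{1/2} equals the square root of the Moore–Penrose pseudo-inverse of A, i.e. (A^{1/2})^{[-1]} = (A^{[-1]})^{1/2}; in particular these two (possibly unbounded) operators have the same domain. -/

import Mathlib

open scoped InnerProductSpace

/-- Graph of the Moore–Penrose pseudo-inverse `A^{[-1]}` of a bounded selfadjoint operator `A`
on a Hilbert space `X`: it consists of the pairs `(A x + k, P x)` with `k ∈ ker A` and `P` the
orthogonal projection onto `(ker A)ᗮ = closure (range A)`; equivalently, the pairs `(u, v)` with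
`v ∈ (ker A)ᗮ` and `u - A v ∈ ker A`. -/
noncomputable def mpGraph {X : Type*} [NormedAddCommGroup X] [InnerProductSpace ℂ X]
    [CompleteSpace X] (A : X →L[ℂ] X) : Submodule ℂ (X × X) :=
  (Submodule.comap (LinearMap.snd ℂ X X) (LinearMap.ker (A : X →ₗ[ℂ] X))ᗮ) ⊓
    (Submodule.comap (LinearMap.fst ℂ X X - (A : X →ₗ[ℂ] X).comp (LinearMap.snd ℂ X X))
      (LinearMap.ker (A : X →ₗ[ℂ] X)))

/-! With `B = A^{1/2}`, so that `A = B * B`, all three properties of `B^{[-1]}` come down to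
`ker (B * B) = ker B` and `range B ⊆ (ker B)ᗮ`: a pair `(u, v)` lies in the graph of `B^{[-1]}`
iff `v ∈ (ker B)ᗮ` and `u ≡ B v` modulo `ker B`, so tested against vectors of `(ker B)ᗮ` it
behaves like the graph of `B` read backwards. -/

open SetRel

section

variable {X : Type*} [NormedAddCommGroup X] [InnerProductSpace ℂ X] [CompleteSpace X]
  {T : X →L[ℂ] X}

/-- Graph of the adjoint `S*` of the operator `S` whose graph `G` consists of the pairs
`(u, S u)`. -/
def adjointGraph (G : Submodule ℂ (X × X)) : Set (X × X) :=
  {q | ∀ p ∈ G, ⟪p.2, q.1⟫_ℂ = ⟪p.1, q.2⟫_ℂ}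

theorem mem_mpGraph {p : X × X} :
    p ∈ mpGraph T ↔ p.2 ∈ (LinearMap.ker (T : X →ₗ[ℂ] X))ᗮ ∧
      p.1 - T p.2 ∈ LinearMap.ker (T : X →ₗ[ℂ] X) := by
  simp [mpGraph, Submodule.mem_comap]

theorem mk_zero_mem_mpGraph {k : X} (hk : k ∈ LinearMap.ker (T : X →ₗ[ℂ] X)) :
    (k, 0) ∈ mpGraph T :=
  mem_mpGraph.mpr ⟨Submodule.zero_mem _, by simpa using hk⟩

theorem mk_apply_mem_mpGraph {v : X} (hv : v ∈ (LinearMap.ker (T : X →ₗ[ℂ] X))ᗮ) :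
    (T v, v) ∈ mpGraph T :=
  mem_mpGraph.mpr ⟨hv, by simp⟩

theorem inner_fst_of_mem_mpGraph {v : X} (hv : v ∈ (LinearMap.ker (T : X →ₗ[ℂ] X))ᗮ)
    {q : X × X} (hq : q ∈ mpGraph T) : ⟪v, q.1⟫_ℂ = ⟪v, T q.2⟫_ℂ := by
  have h := (Submodule.mem_orthogonal' _ v).mp hv _ (mem_mpGraph.mp hq).2
  rwa [inner_sub_right, sub_eq_zero] at h

theorem ContinuousLinearMap.IsPositive.re_inner_nonneg_of_mem_mpGraph (hT : T.IsPositive)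
    {p : X × X} (hp : p ∈ mpGraph T) : 0 ≤ (⟪p.2, p.1⟫_ℂ).re := by
  rw [inner_fst_of_mem_mpGraph (mem_mpGraph.mp hp).1 hp]
  exact (Complex.nonneg_iff.mp (hT.inner_nonneg_right p.2)).1

namespace IsSelfAdjoint

variable (hT : IsSelfAdjoint T)
include hT

theorem inner_left_eq_inner_right (x y : X) : ⟪T x, y⟫_ℂ = ⟪x, T y⟫_ℂ :=
  hT.isSymmetric x y

theorem ker_mul_self :
    LinearMap.ker ((T * T : X →L[ℂ] X) : X →ₗ[ℂ] X) =
      LinearMap.ker (T : X →ₗ[ℂ] X) := by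
  rw [← T.ker_adjoint_comp_self, hT.adjoint_eq]
  rfl

theorem apply_mem_orthogonal_ker (x : X) : T x ∈ (LinearMap.ker (T : X →ₗ[ℂ] X))ᗮ := by
  rw [Submodule.mem_orthogonal]
  intro k hk
  rw [← hT.inner_left_eq_inner_right, show T k = 0 from hk, inner_zero_left]

theorem adjointGraph_mpGraph : adjointGraph (mpGraph T) = mpGraph T := by
  ext q
  constructor
  · intro hq
    have hq₂ : q.2 ∈ (LinearMap.ker (T : X →ₗ[ℂ] X))ᗮ := by
      rw [Submodule.mem_orthogonal]
      intro k hk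
      simpa using (hq (k, 0) (mk_zero_mem_mpGraph hk)).symm
    have hq₁ : q.1 - T q.2 ∈ (LinearMap.ker (T : X →ₗ[ℂ] X))ᗮᗮ := by
      rw [Submodule.mem_orthogonal]
      intro v hv
      rw [inner_sub_right, hq (T v, v) (mk_apply_mem_mpGraph hv),
        hT.inner_left_eq_inner_right, sub_self]
    rw [Submodule.orthogonal_orthogonal] at hq₁
    exact mem_mpGraph.mpr ⟨hq₂, hq₁⟩
  · intro hq p hp
    rw [inner_fst_of_mem_mpGraph (mem_mpGraph.mp hp).1 hq, ← inner_conj_symm p.1,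
      inner_fst_of_mem_mpGraph (mem_mpGraph.mp hq).1 hp, ← hT.inner_left_eq_inner_right,
      inner_conj_symm]

theorem mpGraph_comp_mpGraph :
    ((mpGraph T : Set (X × X)) ○ (mpGraph T : Set (X × X))) = mpGraph (T * T) := by
  ext ⟨u, w⟩
  simp only [mem_comp, SetLike.mem_coe, mem_mpGraph, hT.ker_mul_self]
  constructor
  · rintro ⟨y, ⟨-, huy⟩, ⟨hw, hyw⟩⟩
    have hTy : T y = T (T w) := by simpa [sub_eq_zero] using hyw
    exact ⟨hw, hTy ▸ huy⟩
  · rintro ⟨hw, huw⟩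
    exact ⟨T w, ⟨hT.apply_mem_orthogonal_ker w, huw⟩, ⟨hw, by simp⟩⟩

end IsSelfAdjoint

end

/-- Let `A` be a bounded nonnegative selfadjoint operator on a Hilbert space
`X`. Then `(A^{1/2})^{[-1]} = (A^{[-1]})^{1/2}`.  Since `(A^{[-1]})^{1/2}` is by definition the
unique nonnegative selfadjoint (possibly unbounded) operator whose square is `A^{[-1]}`, this is
formalized as: the graph `S` of `(A^{1/2})^{[-1]}` is nonnegative, selfadjoint (its graph equals
the graph of its adjoint), and the composition `S ∘ S` equals the graph of `A^{[-1]}` (in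
particular the two operators have the same domain). -/
theorem statement0 {X : Type*} [NormedAddCommGroup X] [InnerProductSpace ℂ X] [CompleteSpace X]
    (A : X →L[ℂ] X) (hA : A.IsPositive) :
    (∀ p ∈ mpGraph (CFC.sqrt A), 0 ≤ (⟪p.2, p.1⟫_ℂ).re) ∧
    ((mpGraph (CFC.sqrt A) : Set (X × X)) =
      {q : X × X | ∀ p ∈ mpGraph (CFC.sqrt A), ⟪p.2, q.1⟫_ℂ = ⟪p.1, q.2⟫_ℂ}) ∧
    ({pr : X × X | ∃ y : X, (pr.1, y) ∈ mpGraph (CFC.sqrt A) ∧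
        (y, pr.2) ∈ mpGraph (CFC.sqrt A)} = (mpGraph A : Set (X × X))) := by
  have hB : (CFC.sqrt A).IsPositive :=
    (ContinuousLinearMap.nonneg_iff_isPositive _).mp (CFC.sqrt_nonneg A)
  have hA_eq : CFC.sqrt A * CFC.sqrt A = A :=
    CFC.sqrt_mul_sqrt_self A ((ContinuousLinearMap.nonneg_iff_isPositive A).mpr hA)
  refine ⟨fun _ ↦ hB.re_inner_nonneg_of_mem_mpGraph, ?_, ?_⟩
  · exact hB.isSelfAdjoint.adjointGraph_mpGraph.symm
  · have h := hB.isSelfAdjoint.mpGraph_comp_mpGraph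
    rw [hA_eq] at h
    exact h
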